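/- arXiv:1009.2973 — 3 statements merged into one kernel-verified Lean document; each statement's English description precedes it below -/
import Mathlib

section
/- Let K, ρ, α∞ > 0. Define P∞(S) = K e^{ρ α∞} ∫_1^∞ (1/z²) e^{−zρS} dz for S > 0. Then P∞ satisfies the ODE S P∞''(S) + ρ S P∞'(S) − ρ P∞(S) = 0 for all S > 0. -/
/-! With `E k t = ∫_1^∞ e^{-tz} / z^k dz` one has `P S = K e^{ρA} E 2 (ρS)`. Differentiating
under the integral sign gives `(E (k+1))' = -E k`, and integrating by parts gives
`k E (k+1) t + t E k t = e^{-t}`. With these, the ODE becomes the difference of the cases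
`k = 0` and `k = 1` of the recurrence. -/

open MeasureTheory Real Filter Set Topology

noncomputable def expIntegralE (k : ℕ) (t : ℝ) : ℝ :=
  ∫ z in Ioi (1 : ℝ), exp (-t * z) / z ^ k

lemma norm_exp_neg_mul_div_pow_le {k : ℕ} {t z : ℝ} (hz : 1 ≤ z) :
    ‖exp (-t * z) / z ^ k‖ ≤ exp (-t * z) := by
  rw [norm_div, norm_of_nonneg (exp_pos _).le, norm_of_nonneg (by positivity)]
  exact div_le_self (exp_pos _).le (one_le_pow₀ hz)

lemma integrableOn_exp_neg_mul_div_pow (k : ℕ) {t : ℝ} (ht : 0 < t) :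
    IntegrableOn (fun z => exp (-t * z) / z ^ k) (Ioi 1) := by
  have hcont : ContinuousOn (fun z : ℝ => exp (-t * z) / z ^ k) (Ioi 1) := by
    fun_prop (disch := intro z hz; exact pow_ne_zero _ (zero_lt_one.trans hz).ne')
  refine (exp_neg_integrableOn_Ioi 1 ht).mono' (hcont.aestronglyMeasurable measurableSet_Ioi) ?_
  filter_upwards [ae_restrict_mem measurableSet_Ioi] with z hz
  exact norm_exp_neg_mul_div_pow_le hz.le

lemma tendsto_exp_neg_mul_div_pow_atTop (k : ℕ) {t : ℝ} (ht : 0 < t) :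
    Tendsto (fun z => exp (-t * z) / z ^ k) atTop (𝓝 0) := by
  have hexp : Tendsto (fun z => exp (-t * z)) atTop (𝓝 0) := by
    simpa only [neg_mul, Function.comp_def, id] using
      tendsto_exp_neg_atTop_nhds_zero.comp (tendsto_id.const_mul_atTop ht)
  refine squeeze_zero_norm' ?_ hexp
  filter_upwards [eventually_ge_atTop 1] with z hz
  exact norm_exp_neg_mul_div_pow_le hz

lemma hasDerivAt_expIntegralE (k : ℕ) {t : ℝ} (ht : 0 < t) :
    HasDerivAt (expIntegralE (k + 1)) (-expIntegralE k t) t := by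
  have ht2 : 0 < t / 2 := half_pos ht
  have key := hasDerivAt_integral_of_dominated_loc_of_deriv_le
    (F := fun s z => exp (-s * z) / z ^ (k + 1)) (F' := fun s z => -(exp (-s * z) / z ^ k))
    (μ := volume.restrict (Ioi 1)) (bound := fun z => exp (-(t / 2) * z))
    (Metric.ball_mem_nhds t ht2)
    ((eventually_gt_nhds ht).mono fun s hs =>
      (integrableOn_exp_neg_mul_div_pow _ hs).aestronglyMeasurable)
    (integrableOn_exp_neg_mul_div_pow _ ht)
    (integrableOn_exp_neg_mul_div_pow _ ht).neg.aestronglyMeasurable ?bound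
    (exp_neg_integrableOn_Ioi 1 ht2) ?deriv
  case bound =>
    filter_upwards [ae_restrict_mem measurableSet_Ioi] with z hz s hs
    rw [norm_neg]
    refine (norm_exp_neg_mul_div_pow_le hz.le).trans (exp_le_exp.2 ?_)
    rw [Metric.mem_ball, Real.dist_eq, abs_lt] at hs
    nlinarith [mem_Ioi.1 hz]
  case deriv =>
    filter_upwards [ae_restrict_mem measurableSet_Ioi] with z hz s _
    have hz0 : z ≠ 0 := (zero_lt_one.trans hz).ne'
    have hlin : HasDerivAt (fun s => -s * z) (-z) s := by
      simpa using (hasDerivAt_id s).neg.mul_const z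
    refine (hlin.exp.div_const (z ^ (k + 1))).congr_deriv ?_
    rw [pow_succ, mul_neg, neg_div, mul_div_mul_right _ _ hz0]
  rw [integral_neg] at key
  exact key.2

lemma natCast_mul_expIntegralE_succ_add_mul (k : ℕ) {t : ℝ} (ht : 0 < t) :
    k * expIntegralE (k + 1) t + t * expIntegralE k t = exp (-t) := by
  have hderiv : ∀ z ∈ Ici (1 : ℝ), HasDerivAt (fun z => -(exp (-t * z) / z ^ k))
      (k * (exp (-t * z) / z ^ (k + 1)) + t * (exp (-t * z) / z ^ k)) z := by
    intro z hz
    have hz0 : z ≠ 0 := (zero_lt_one.trans_le hz).ne'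
    have hlin : HasDerivAt (fun z => -t * z) (-t) z := by
      simpa using (hasDerivAt_id z).const_mul (-t)
    refine (hlin.exp.div (hasDerivAt_pow k z) (pow_ne_zero k hz0)).neg.congr_deriv ?_
    rcases k with _ | k
    · simp [mul_comm]
    · rw [Nat.add_sub_cancel]
      field_simp
      ring
  have hint₁ := (integrableOn_exp_neg_mul_div_pow (k + 1) ht).const_mul (k : ℝ)
  have hint₀ := (integrableOn_exp_neg_mul_div_pow k ht).const_mul t
  have h := integral_Ioi_of_hasDerivAt_of_tendsto' hderiv (hint₁.add hint₀)
    (tendsto_exp_neg_mul_div_pow_atTop k ht).neg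
  rw [integral_add hint₁ hint₀, integral_const_mul, integral_const_mul] at h
  simpa [expIntegralE] using h

lemma hasDerivAt_expIntegralE_const_mul (k : ℕ) {ρ S : ℝ} (h : 0 < ρ * S) :
    HasDerivAt (fun s => expIntegralE (k + 1) (ρ * s)) (-expIntegralE k (ρ * S) * ρ) S := by
  have hlin : HasDerivAt (fun s => ρ * s) ρ S := by simpa using (hasDerivAt_id S).const_mul ρ
  exact (hasDerivAt_expIntegralE k h).comp S hlin

theorem stmt_5_general (K ρ A : ℝ) (hρ : 0 < ρ)
    (P : ℝ → ℝ)
    (hP : ∀ S : ℝ, P S =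
      K * Real.exp (ρ * A) * ∫ z in Set.Ioi (1 : ℝ), (1 / z ^ 2) * Real.exp (-z * ρ * S)) :
    ∀ S : ℝ, 0 < S →
      S * deriv (deriv P) S + ρ * S * deriv P S - ρ * P S = 0 := by
  intro S hS
  set C := K * exp (ρ * A)
  have hPE : P = fun s => C * expIntegralE 2 (ρ * s) := by
    funext s
    rw [hP, expIntegralE]
    congr! 3 with z
    ring_nf
  have hP' : ∀ s, 0 < s → HasDerivAt P (C * (-expIntegralE 1 (ρ * s) * ρ)) s := fun s hs => by
    simpa only [hPE] using (hasDerivAt_expIntegralE_const_mul 1 (mul_pos hρ hs)).const_mul C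
  have hP'' : HasDerivAt (deriv P) (C * (-(-expIntegralE 0 (ρ * S) * ρ) * ρ)) S := by
    refine ((hasDerivAt_expIntegralE_const_mul 0 (mul_pos hρ hS)).neg.mul_const ρ |>.const_mul C)
      |>.congr_of_eventuallyEq ?_
    filter_upwards [eventually_gt_nhds hS] with s hs using (hP' s hs).deriv
  have r₀ := natCast_mul_expIntegralE_succ_add_mul 0 (mul_pos hρ hS)
  have r₁ := natCast_mul_expIntegralE_succ_add_mul 1 (mul_pos hρ hS)
  rw [hP''.deriv, (hP' S hS).deriv, hPE]
  linear_combination C * ρ * (r₀ - r₁)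

theorem stmt_5 (K ρ A : ℝ) (hK : 0 < K) (hρ : 0 < ρ) (hα : 0 < A)
    (P : ℝ → ℝ)
    (hP : ∀ S : ℝ, P S =
      K * Real.exp (ρ * A) * ∫ z in Set.Ioi (1 : ℝ), (1 / z ^ 2) * Real.exp (-z * ρ * S)) :
    ∀ S : ℝ, 0 < S →
      S * deriv (deriv P) S + ρ * S * deriv P S - ρ * P S = 0 :=
  stmt_5_general K ρ A hρ P hP
end

section
/- For each K, ρ > 0 there exists a unique x > 0 satisfying K ρ ∫_1^∞ (1/z) e^{−xz} dz = e^{−x} with x = ρ α∞; equivalently, the function h(x) = e^x K ρ ∫_1^∞ (1/z) e^{−xz} dz is strictly decreasing on (0, ∞) with h(0⁺) = +∞ and h(∞) = 0, so h(x) = 1 has a unique positive solution. -/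
/-!
Write `F x = eˣ ∫₁^∞ e^{-xz}/z dz = ∫₁^∞ e^{-x(z-1)}/z dz`, so that `h = Kρ F` and the equation
reads `h x = 1`. The integrand of `F` decreases strictly in `x`, so `F` is strictly decreasing, and
it is continuous by dominated convergence. Since `1/z ≤ 1`, `F x ≤ ∫₁^∞ e^{-x(z-1)} dz = 1/x`,
while cutting the integral at `z = 1 + 1/x` gives `F x ≥ e⁻¹ log (1 + 1/x)`. The intermediate
value theorem then yields exactly one solution.
-/

open MeasureTheory Real Filter Set Topology

theorem setIntegral_lt_setIntegral_of_forall_lt {α : Type*} [MeasurableSpace α] {μ : Measure α}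
    {s : Set α} {f g : α → ℝ} (hs : MeasurableSet s) (hμs : μ s ≠ 0)
    (hf : IntegrableOn f s μ) (hg : IntegrableOn g s μ) (hlt : ∀ x ∈ s, f x < g x) :
    ∫ x in s, f x ∂μ < ∫ x in s, g x ∂μ := by
  rw [← sub_pos, ← integral_sub hg hf,
    integral_pos_iff_support_of_nonneg_ae (f := fun x => g x - f x) _ (hg.sub hf),
    Measure.restrict_apply' hs,
    inter_eq_right.mpr fun x hx => Function.mem_support.mpr (sub_pos.mpr (hlt x hx)).ne']
  · exact pos_iff_ne_zero.mpr hμs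
  · filter_upwards [ae_restrict_mem hs] with x hx using (sub_pos.mpr (hlt x hx)).le

theorem StrictAntiOn.existsUnique_eq_of_tendsto {f : ℝ → ℝ} {a l c : ℝ}
    (hanti : StrictAntiOn f (Ioi a)) (hcont : ContinuousOn f (Ioi a))
    (hleft : Tendsto f (𝓝[>] a) atTop) (hright : Tendsto f atTop (𝓝 l)) (hc : l < c) :
    ∃! x, a < x ∧ f x = c := by
  obtain ⟨u, hcu, hu⟩ := ((hleft.eventually_ge_atTop c).and self_mem_nhdsWithin).exists
  obtain ⟨v, hvc, huv⟩ :=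
    ((hright.eventually (eventually_lt_nhds hc)).and (eventually_gt_atTop u)).exists
  obtain ⟨x, hx, hfx⟩ := intermediate_value_Icc' huv.le
    (hcont.mono fun y hy => lt_of_lt_of_le hu hy.1) ⟨hvc.le, hcu⟩
  exact ⟨x, ⟨lt_of_lt_of_le hu hx.1, hfx⟩, fun y hy =>
    hanti.injOn hy.1 (lt_of_lt_of_le hu hx.1) (hy.2.trans hfx.symm)⟩

/-- The scaled exponential integral `eˣ E₁(x)`. -/
noncomputable def scaledExpIntegral (x : ℝ) : ℝ :=
  ∫ z in Ioi (1 : ℝ), exp (-x * (z - 1)) / z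

theorem exp_mul_integral_eq_scaledExpIntegral (x : ℝ) :
    exp x * ∫ z in Ioi (1 : ℝ), (1 / z) * exp (-x * z) = scaledExpIntegral x := by
  rw [scaledExpIntegral, ← integral_const_mul]
  congr 1 with z
  rw [show -x * (z - 1) = x + -x * z by ring, exp_add]
  ring

section

variable {x : ℝ}

theorem integrableOn_exp_neg_mul_sub_one (hx : 0 < x) :
    IntegrableOn (fun z => exp (-x * (z - 1))) (Ioi 1) := by
  refine IntegrableOn.congr_fun ((integrableOn_exp_mul_Ioi (neg_neg_of_pos hx) 1).const_mul
    (exp x)) (fun z _ => ?_) measurableSet_Ioi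
  rw [← exp_add]
  ring_nf

theorem integral_exp_neg_mul_sub_one (hx : 0 < x) :
    ∫ z in Ioi (1 : ℝ), exp (-x * (z - 1)) = x⁻¹ := by
  simp only [mul_sub, mul_one, sub_neg_eq_add, exp_add]
  rw [integral_mul_const, integral_exp_mul_Ioi (neg_neg_of_pos hx), mul_one, neg_div_neg_eq,
    div_mul_eq_mul_div, ← exp_add, neg_add_cancel, exp_zero, one_div]

theorem exp_neg_mul_sub_one_div_le {z : ℝ} (hz : 1 ≤ z) :
    exp (-x * (z - 1)) / z ≤ exp (-x * (z - 1)) :=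
  div_le_self (exp_pos _).le hz

theorem integrableOn_scaledExpIntegrand (hx : 0 < x) :
    IntegrableOn (fun z => exp (-x * (z - 1)) / z) (Ioi 1) := by
  refine (integrableOn_exp_neg_mul_sub_one hx).mono'
    (by fun_prop : Measurable fun z : ℝ => exp (-x * (z - 1)) / z).aestronglyMeasurable ?_
  filter_upwards [ae_restrict_mem measurableSet_Ioi] with z hz
  rw [norm_of_nonneg (div_pos (exp_pos _) (zero_lt_one.trans hz)).le]
  exact exp_neg_mul_sub_one_div_le hz.le

theorem scaledExpIntegral_nonneg : 0 ≤ scaledExpIntegral x :=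
  setIntegral_nonneg measurableSet_Ioi fun _ hz =>
    div_nonneg (exp_pos _).le (zero_lt_one.trans hz).le

theorem scaledExpIntegral_le_inv (hx : 0 < x) : scaledExpIntegral x ≤ x⁻¹ := by
  rw [← integral_exp_neg_mul_sub_one hx]
  exact setIntegral_mono_on (integrableOn_scaledExpIntegrand hx)
    (integrableOn_exp_neg_mul_sub_one hx) measurableSet_Ioi fun z hz =>
    exp_neg_mul_sub_one_div_le (le_of_lt hz)

/-- On `[1, 1 + x⁻¹]` the weight `exp (-x * (z - 1))` is at least `exp (-1)`. -/
theorem exp_neg_one_mul_log_le_scaledExpIntegral (hx : 0 < x) :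
    exp (-1) * log (1 + x⁻¹) ≤ scaledExpIntegral x := by
  set M := 1 + x⁻¹
  have hM : (1 : ℝ) ≤ M := le_add_of_nonneg_right (inv_pos.mpr hx).le
  have hpos : ∀ z ∈ Icc 1 M, 0 < z := fun z hz => zero_lt_one.trans_le hz.1
  have hweight : ∀ z ∈ Icc 1 M, exp (-1) / z ≤ exp (-x * (z - 1)) / z := by
    intro z hz
    have : x * (z - 1) ≤ 1 := by
      calc x * (z - 1) ≤ x * x⁻¹ := mul_le_mul_of_nonneg_left (by linarith [hz.2]) hx.le
        _ = 1 := mul_inv_cancel₀ hx.ne'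
    exact div_le_div_of_nonneg_right (exp_le_exp.mpr (by linarith)) (hpos z hz).le
  calc exp (-1) * log M = ∫ z in (1 : ℝ)..M, exp (-1) / z := by
        simp only [div_eq_mul_inv (exp (-1))]
        rw [intervalIntegral.integral_const_mul, integral_inv_of_pos one_pos (by linarith),
          div_one]
    _ ≤ ∫ z in (1 : ℝ)..M, exp (-x * (z - 1)) / z := by
        refine intervalIntegral.integral_mono_on hM ?_ ?_ hweight
        · exact (continuousOn_const.div continuousOn_id fun z hz =>
            (hpos z hz).ne').intervalIntegrable_of_Icc hM
        · exact (ContinuousOn.div (by fun_prop) continuousOn_id fun z hz =>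
            (hpos z hz).ne').intervalIntegrable_of_Icc hM
    _ = ∫ z in Ioc (1 : ℝ) M, exp (-x * (z - 1)) / z := intervalIntegral.integral_of_le hM
    _ ≤ scaledExpIntegral x :=
        setIntegral_mono_set (integrableOn_scaledExpIntegrand hx)
          (ae_restrict_of_forall_mem measurableSet_Ioi fun z hz =>
            div_nonneg (exp_pos _).le (zero_lt_one.trans hz).le)
          Ioc_subset_Ioi_self.eventuallyLE

end

theorem scaledExpIntegral_strictAntiOn : StrictAntiOn scaledExpIntegral (Ioi 0) :=
  fun a ha b hb hab => setIntegral_lt_setIntegral_of_forall_lt measurableSet_Ioi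
    (by simp [Real.volume_Ioi]) (integrableOn_scaledExpIntegrand hb)
    (integrableOn_scaledExpIntegrand ha) fun z hz =>
      div_lt_div_of_pos_right (exp_lt_exp.mpr (by nlinarith [mem_Ioi.mp hz]))
        (zero_lt_one.trans hz)

theorem continuousOn_scaledExpIntegral_Ioi {c : ℝ} (hc : 0 < c) :
    ContinuousOn scaledExpIntegral (Ioi c) := by
  refine continuousOn_of_dominated (bound := fun z => exp (-c * (z - 1)))
    (fun x _ =>
      (by fun_prop : Measurable fun z : ℝ => exp (-x * (z - 1)) / z).aestronglyMeasurable)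
    (fun x hx => ?_) (integrableOn_exp_neg_mul_sub_one hc) ?_
  · filter_upwards [ae_restrict_mem measurableSet_Ioi] with z hz
    rw [norm_of_nonneg (div_pos (exp_pos _) (zero_lt_one.trans hz)).le]
    refine (exp_neg_mul_sub_one_div_le (le_of_lt hz)).trans (exp_le_exp.mpr ?_)
    nlinarith [mem_Ioi.mp hz, mem_Ioi.mp hx]
  · filter_upwards [ae_restrict_mem measurableSet_Ioi] with z hz
    exact (Continuous.continuousOn (by fun_prop)).div_const z

theorem continuousOn_scaledExpIntegral : ContinuousOn scaledExpIntegral (Ioi 0) := fun _ hx =>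
  ((continuousOn_scaledExpIntegral_Ioi (half_pos hx)).continuousAt
    (Ioi_mem_nhds (half_lt_self hx))).continuousWithinAt

theorem tendsto_scaledExpIntegral_atTop : Tendsto scaledExpIntegral atTop (𝓝 0) :=
  tendsto_of_tendsto_of_tendsto_of_le_of_le' tendsto_const_nhds tendsto_inv_atTop_zero
    (Eventually.of_forall fun _ => scaledExpIntegral_nonneg)
    ((eventually_gt_atTop 0).mono fun _ => scaledExpIntegral_le_inv)

theorem tendsto_scaledExpIntegral_nhdsGT_zero : Tendsto scaledExpIntegral (𝓝[>] 0) atTop := by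
  have hlog : Tendsto (fun x : ℝ => exp (-1) * log (1 + x⁻¹)) (𝓝[>] 0) atTop :=
    (tendsto_log_atTop.comp (tendsto_atTop_add_const_left _ 1
      tendsto_inv_nhdsGT_zero)).const_mul_atTop (exp_pos _)
  exact tendsto_atTop_mono' _ (eventually_mem_nhdsWithin.mono fun _ =>
    exp_neg_one_mul_log_le_scaledExpIntegral) hlog

theorem stmt_7 (K ρ : ℝ) (hK : 0 < K) (hρ : 0 < ρ)
    (h : ℝ → ℝ)
    (hh : ∀ x : ℝ, h x =
      Real.exp x * K * ρ * ∫ z in Set.Ioi (1 : ℝ), (1 / z) * Real.exp (-x * z)) :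
    StrictAntiOn h (Set.Ioi 0) ∧
    Filter.Tendsto h (nhdsWithin 0 (Set.Ioi 0)) Filter.atTop ∧
    Filter.Tendsto h Filter.atTop (nhds 0) ∧
    (∃! x : ℝ, 0 < x ∧
      K * ρ * (∫ z in Set.Ioi (1 : ℝ), (1 / z) * Real.exp (-x * z)) = Real.exp (-x)) := by
  have hKρ : 0 < K * ρ := mul_pos hK hρ
  have hF : h = fun x => K * ρ * scaledExpIntegral x := funext fun x => by
    rw [hh, ← exp_mul_integral_eq_scaledExpIntegral]
    ring
  have hanti : StrictAntiOn h (Ioi 0) := hF ▸ fun a ha b hb hab =>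
    mul_lt_mul_of_pos_left (scaledExpIntegral_strictAntiOn ha hb hab) hKρ
  have hleft : Tendsto h (𝓝[>] 0) atTop :=
    hF ▸ tendsto_scaledExpIntegral_nhdsGT_zero.const_mul_atTop hKρ
  have hright : Tendsto h atTop (𝓝 0) := by
    simpa [hF] using tendsto_scaledExpIntegral_atTop.const_mul (K * ρ)
  have hcont : ContinuousOn h (Ioi 0) :=
    hF ▸ continuousOn_const.mul continuousOn_scaledExpIntegral
  refine ⟨hanti, hleft, hright, ?_⟩
  convert hanti.existsUnique_eq_of_tendsto hcont hleft hright one_pos using 3 with x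
  rw [hh, ← mul_right_inj' (exp_pos x).ne', ← exp_add, add_neg_cancel, exp_zero]
  simp only [mul_assoc]
end

section
/- As ρ → 0⁺, the solution x(ρ) of K ρ ∫_1^∞ (1/z) e^{−xz} dz = e^{−x} satisfies x(ρ) = e^{−γ} e^{−1/(ρK)} (1 + O(ρ)); in particular x(ρ) · e^{γ} e^{1/(ρK)} → 1 as ρ → 0⁺. -/
open MeasureTheory Real Set Filter Topology

/-!
Substituting `t = x z` turns the equation into `K ρ E₁(x) = e^{-x}`, where
`E₁(x) = ∫_x^∞ e^{-t}/t dt`. The bound `E₁(x) ≤ e^{-x}/x` gives `x(ρ) ≤ K ρ → 0`. Integrating by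
parts against `log`, `e^x E₁(x) = -log x + e^x ∫_x^∞ e^{-t} log t dt`, and the last integral tends
to `Γ'(1) = -γ`; hence `log x + γ + 1/(ρK) = log x + γ + e^x E₁(x) → 0`.
-/

noncomputable def expIntegralE1 (x : ℝ) : ℝ := ∫ t in Ioi x, exp (-t) / t

lemma integrableOn_exp_neg_div_self_Ioi {x : ℝ} (hx : 0 < x) :
    IntegrableOn (fun t : ℝ => exp (-t) / t) (Ioi x) := by
  refine ((exp_neg_integrableOn_Ioi x one_pos).const_mul x⁻¹).mono' ?_ ?_
  · exact ContinuousOn.aestronglyMeasurable (by fun_prop (disch := grind)) measurableSet_Ioi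
  · filter_upwards [ae_restrict_mem measurableSet_Ioi] with t ht
    have ht0 : 0 < t := hx.trans ht
    rw [norm_of_nonneg (by positivity), neg_one_mul, div_eq_inv_mul]
    gcongr
    exact ht.le

lemma expIntegralE1_le {x : ℝ} (hx : 0 < x) : expIntegralE1 x ≤ exp (-x) / x := by
  calc expIntegralE1 x ≤ ∫ t in Ioi x, x⁻¹ * exp (-t) := by
        refine setIntegral_mono_on (integrableOn_exp_neg_div_self_Ioi hx)
          ((integrableOn_exp_neg_Ioi x).const_mul _) measurableSet_Ioi fun t ht => ?_
        rw [div_eq_inv_mul]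
        gcongr
        exact le_of_lt ht
    _ = exp (-x) / x := by rw [integral_const_mul, integral_exp_neg_Ioi, inv_mul_eq_div]

lemma integral_Ioi_one_inv_mul_exp_neg_mul {x : ℝ} (hx : 0 < x) :
    ∫ z in Ioi (1 : ℝ), 1 / z * exp (-x * z) = expIntegralE1 x := by
  have h := integral_comp_mul_left_Ioi (fun t : ℝ => exp (-t) / t) 1 hx
  rw [mul_one, smul_eq_mul] at h
  rw [expIntegralE1, ← mul_inv_cancel_left₀ hx.ne' (∫ t in Ioi x, exp (-t) / t), ← h,
    ← integral_const_mul]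
  refine setIntegral_congr_fun measurableSet_Ioi fun z hz => ?_
  have hz0 : (0 : ℝ) < z := zero_lt_one.trans hz
  field_simp

lemma le_of_mul_expIntegralE1_eq_exp_neg {c y : ℝ} (hc : 0 < c) (hy : 0 < y)
    (h : c * expIntegralE1 y = exp (-y)) : y ≤ c := by
  have hle := mul_le_mul_of_nonneg_left (expIntegralE1_le hy) hc.le
  rw [h, mul_div_assoc', le_div_iff₀ hy] at hle
  exact le_of_mul_le_mul_left (by linarith) (exp_pos _)

lemma exp_mul_expIntegralE1_eq_inv {c y : ℝ} (h : c * expIntegralE1 y = exp (-y)) :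
    exp y * expIntegralE1 y = c⁻¹ := by
  refine eq_inv_of_mul_eq_one_left ?_
  rw [mul_assoc, ← mul_comm c, h, ← exp_add, add_neg_cancel, exp_zero]

lemma integrableOn_exp_neg_mul_log_Ioi :
    IntegrableOn (fun t : ℝ => exp (-t) * log t) (Ioi 0) := by
  rw [← Ioc_union_Ioi_eq_Ioi zero_le_one]
  refine IntegrableOn.union ?_ ?_
  · rw [← intervalIntegrable_iff_integrableOn_Ioc_of_le zero_le_one]
    exact (intervalIntegral.intervalIntegrable_log' (a := 0) (b := 1)).continuousOn_mul
      (by fun_prop)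
  · have hgamma : IntegrableOn (fun t : ℝ => exp (-t) * t ^ ((2 : ℝ) - 1)) (Ioi 1) :=
      (GammaIntegral_convergent two_pos).mono_set (Ioi_subset_Ioi zero_le_one)
    refine hgamma.mono' (ContinuousOn.aestronglyMeasurable ?_ measurableSet_Ioi) ?_
    · exact continuous_exp.comp_continuousOn (by fun_prop) |>.mul
        (continuousOn_log.mono fun t ht => (zero_lt_one.trans ht).ne')
    · filter_upwards [ae_restrict_mem measurableSet_Ioi] with t (ht : 1 < t)
      rw [norm_mul, norm_of_nonneg (exp_nonneg _), norm_of_nonneg (log_nonneg ht.le),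
        show (2 : ℝ) - 1 = 1 by norm_num, rpow_one]
      gcongr
      exact (log_le_sub_one_of_pos (zero_lt_one.trans ht)).trans (by linarith)

lemma integral_exp_neg_mul_log_Ioi :
    ∫ t in Ioi (0 : ℝ), exp (-t) * log t = -eulerMascheroniConstant := by
  have hGammaIntegral : HasDerivAt Complex.GammaIntegral (-eulerMascheroniConstant : ℂ) 1 := by
    refine Complex.hasDerivAt_Gamma_one.congr_of_eventuallyEq ?_
    filter_upwards [(Complex.continuous_re.isOpen_preimage _ isOpen_Ioi).mem_nhds
      (by simp : (1 : ℂ) ∈ Complex.re ⁻¹' Ioi 0)] with s hs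
    exact (Complex.Gamma_eq_integral hs).symm
  have h := (Complex.hasDerivAt_GammaIntegral (by simp)).unique hGammaIntegral
  simp only [sub_self, Complex.cpow_zero, one_mul] at h
  have h' : ((∫ t in Ioi (0 : ℝ), exp (-t) * log t : ℝ) : ℂ) = -eulerMascheroniConstant := by
    rw [← h, ← integral_complex_ofReal]
    push_cast
    simp_rw [mul_comm]
  exact_mod_cast h'

lemma hasDerivAt_exp_neg_mul_log {t : ℝ} (ht : 0 < t) :
    HasDerivAt (fun t : ℝ => exp (-t) * log t) (exp (-t) / t - exp (-t) * log t) t :=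
  ((hasDerivAt_neg t).exp.mul (hasDerivAt_log ht.ne')).congr_deriv (by ring)

lemma tendsto_exp_neg_mul_log_atTop : Tendsto (fun t : ℝ => exp (-t) * log t) atTop (𝓝 0) := by
  refine squeeze_zero_norm' ?_ (tendsto_pow_mul_exp_neg_atTop_nhds_zero 1)
  filter_upwards [eventually_ge_atTop 1] with t ht
  rw [norm_mul, norm_of_nonneg (exp_nonneg _), norm_of_nonneg (log_nonneg ht), pow_one, mul_comm t]
  gcongr
  exact (log_le_sub_one_of_pos (zero_lt_one.trans_le ht)).trans (by linarith)

lemma expIntegralE1_eq_neg_exp_neg_mul_log_add {x : ℝ} (hx : 0 < x) :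
    expIntegralE1 x = -(exp (-x) * log x) + ∫ t in Ioi x, exp (-t) * log t := by
  have hJ := integrableOn_exp_neg_mul_log_Ioi.mono_set (Ioi_subset_Ioi hx.le)
  have h := integral_Ioi_of_hasDerivAt_of_tendsto
    (hasDerivAt_exp_neg_mul_log hx).continuousAt.continuousWithinAt
    (fun t ht => hasDerivAt_exp_neg_mul_log (hx.trans ht))
    ((integrableOn_exp_neg_div_self_Ioi hx).sub hJ) tendsto_exp_neg_mul_log_atTop
  rw [integral_sub (integrableOn_exp_neg_div_self_Ioi hx) hJ] at h
  rw [expIntegralE1]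
  linarith

lemma tendsto_log_add_exp_mul_expIntegralE1 :
    Tendsto (fun x => log x + eulerMascheroniConstant + exp x * expIntegralE1 x)
      (𝓝[>] 0) (𝓝 0) := by
  have hJ : Tendsto (fun x => ∫ t in Ioi x, exp (-t) * log t) (𝓝[>] 0)
      (𝓝 (-eulerMascheroniConstant)) :=
    integral_exp_neg_mul_log_Ioi ▸
      integrableOn_exp_neg_mul_log_Ioi.continuousWithinAt_Ici_primitive_Ioi.mono Ioi_subset_Ici_self
  have hexp : Tendsto exp (𝓝[>] 0) (𝓝 1) :=
    exp_zero ▸ continuous_exp.continuousWithinAt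
  have h := (hexp.mul hJ).const_add eulerMascheroniConstant
  rw [one_mul, add_neg_cancel] at h
  refine h.congr' ?_
  filter_upwards [self_mem_nhdsWithin] with x (hx : 0 < x)
  rw [expIntegralE1_eq_neg_exp_neg_mul_log_add hx, mul_add, mul_neg, ← mul_assoc, ← exp_add,
    add_neg_cancel, exp_zero]
  ring

theorem stmt_8 (K : ℝ) (hK : 0 < K) (x : ℝ → ℝ)
    (hx : ∀ ρ : ℝ, 0 < ρ → 0 < x ρ ∧
      K * ρ * (∫ z in Set.Ioi (1 : ℝ), (1 / z) * Real.exp (-(x ρ) * z)) =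
        Real.exp (-(x ρ))) :
    Filter.Tendsto
      (fun ρ : ℝ => x ρ * Real.exp Real.eulerMascheroniConstant * Real.exp (1 / (ρ * K)))
      (nhdsWithin 0 (Set.Ioi 0)) (nhds 1) := by
  have hE : ∀ ρ > 0, K * ρ * expIntegralE1 (x ρ) = exp (-(x ρ)) := fun ρ hρ => by
    rw [← integral_Ioi_one_inv_mul_exp_neg_mul (hx ρ hρ).1, (hx ρ hρ).2]
  have hx_tendsto : Tendsto x (𝓝[>] 0) (𝓝[>] 0) := by
    have hKρ : Tendsto (fun ρ => K * ρ) (𝓝[>] 0) (𝓝 0) :=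
      (continuous_const_mul K).tendsto' 0 0 (mul_zero K) |>.mono_left nhdsWithin_le_nhds
    refine tendsto_nhdsWithin_of_tendsto_nhds_of_eventually_within _ (squeeze_zero' ?_ ?_ hKρ) ?_
    · filter_upwards [self_mem_nhdsWithin] with ρ hρ using (hx ρ hρ).1.le
    · filter_upwards [self_mem_nhdsWithin] with ρ hρ using
        le_of_mul_expIntegralE1_eq_exp_neg (mul_pos hK hρ) (hx ρ hρ).1 (hE ρ hρ)
    · filter_upwards [self_mem_nhdsWithin] with ρ hρ using (hx ρ hρ).1
  have h :=
    (continuous_exp.tendsto 0).comp (tendsto_log_add_exp_mul_expIntegralE1.comp hx_tendsto)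
  rw [exp_zero] at h
  refine h.congr' ?_
  filter_upwards [self_mem_nhdsWithin] with ρ (hρ : 0 < ρ)
  simp only [Function.comp, exp_mul_expIntegralE1_eq_inv (hE ρ hρ), exp_add, exp_log (hx ρ hρ).1,
    one_div, mul_comm K ρ]
end
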